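/- arXiv:2212.00720 — 4 statements merged into one kernel-verified Lean document; each statement's English description precedes it below -/
import Mathlib

section
/- Under the parallel-computation model where matrix multiplications with no data dependencies can be executed simultaneously, one full weight update of iPC requires exactly 2 rounds of simultaneous matrix multiplications (SMMs), independent of the depth L, while one full weight update of BP requires exactly 2L − 1 SMMs; hence the per-update time complexity is O(1) for iPC and O(L) for BP. -/
/-- A schedule assigns each matrix multiplication a parallel round, respecting dependencies;
`m` is the number of rounds used. -/
def IsSchedule {V : Type*} (dep : V → V → Prop) (m : ℕ) (sched : V → ℕ) : Prop :=
  (∀ v, sched v < m) ∧ ∀ u v, dep u v → sched u < sched v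

/-- In the parallel-computation model, one full weight update of iPC (whose dependency DAG is
`L` mutually independent prediction multiplications followed by `L-1` mutually independent
error-propagation multiplications, each of the latter depending on the former) needs exactly
`2` rounds of simultaneous matrix multiplications, independent of the depth `L`, while one full
weight update of BP (whose `2L-1` multiplications form a chain) needs exactly `2L-1` rounds:
`O(1)` for iPC versus `O(L)` for BP. -/
theorem stmt_10 (L : ℕ) (hL : 2 ≤ L) :
    IsLeast {m | ∃ sched : (Fin L ⊕ Fin (L - 1)) → ℕ,
        IsSchedule (fun u v => (∃ a, u = Sum.inl a) ∧ (∃ b, v = Sum.inr b)) m sched} 2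
      ∧ IsLeast {m | ∃ sched : Fin (2 * L - 1) → ℕ,
          IsSchedule (fun i j : Fin (2 * L - 1) => (j : ℕ) = (i : ℕ) + 1) m sched}
        (2 * L - 1) := by
  have hL1 : 1 ≤ L - 1 := by omega
  constructor
  · constructor
    · exact ⟨fun v => Sum.elim (fun _ => 0) (fun _ => 1) v,
        fun v => by cases v <;> simp,
        fun u v ⟨⟨a, ha⟩, ⟨b, hb⟩⟩ => by subst ha; subst hb; simp⟩
    · rintro m ⟨sched, hub, hdep⟩
      have h := hdep (Sum.inl ⟨0, by omega⟩) (Sum.inr ⟨0, by omega⟩)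
        ⟨⟨_, rfl⟩, ⟨_, rfl⟩⟩
      have := hub (Sum.inr ⟨0, by omega⟩)
      omega
  · constructor
    · exact ⟨fun i => (i : ℕ), fun v => v.2, fun u v h => by dsimp only; omega⟩
    · rintro m ⟨sched, hub, hdep⟩
      have key : ∀ k : ℕ, (hk : k < 2 * L - 1) → k ≤ sched ⟨k, hk⟩ := by
        intro k
        induction k with
        | zero => intro _; exact Nat.zero_le _
        | succ n ih =>
          intro hk
          have h1 : n < 2 * L - 1 := by omega
          have := hdep ⟨n, h1⟩ ⟨n + 1, hk⟩ rfl
          have := ih h1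
          omega
      have h2 : 2 * L - 2 < 2 * L - 1 := by omega
      have := key (2 * L - 2) h2
      have := hub ⟨2 * L - 2, h2⟩
      omega
end

section
/- In the first m rounds of simultaneous matrix multiplications (counting only backward/error-propagation SMMs) on an L-layer network, iPC completes exactly max(0, m − (L − 2)) full weight updates of all layers, whereas BP completes exactly ⌊m / (L − 1)⌋ full weight updates; hence for m ≥ L − 1, iPC completes at least as many full updates as BP, and the ratio tends to L − 1 as m → ∞. -/
/-- Counting only backward/error-propagation SMM rounds on an `L`-layer network (`L ≥ 2`):
in the first `m` rounds iPC completes exactly `m - (L-2)` (truncated subtraction, i.e.,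
`max 0 (m - (L-2))`) full weight updates while BP completes exactly `⌊m / (L-1)⌋`; hence for
`m ≥ L-1` iPC completes at least as many updates as BP, and the ratio tends to `L - 1`. -/
theorem stmt_12 (L : ℕ) (hL : 2 ≤ L) :
    (∀ m : ℕ, L - 1 ≤ m → m / (L - 1) ≤ m - (L - 2))
      ∧ Filter.Tendsto
          (fun m : ℕ => ((m - (L - 2) : ℕ) : ℝ) / ((m / (L - 1) : ℕ) : ℝ))
          Filter.atTop (nhds ((L - 1 : ℕ) : ℝ)) := by
  obtain ⟨k, rfl⟩ : ∃ k, L = k + 2 := ⟨L - 2, by omega⟩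
  have hk1 : (1 : ℕ) ≤ k + 1 := by omega
  have hkk : k + 2 - 1 = k + 1 := by omega
  have hkc : k + 2 - 2 = k := by omega
  rw [hkk, hkc]
  constructor
  · intro m hm
    have hq1 : 1 ≤ m / (k + 1) := (Nat.one_le_div_iff (by omega)).2 hm
    have hq : m / (k + 1) * (k + 1) ≤ m := Nat.div_mul_le_self m (k + 1)
    set q := m / (k + 1) with hqdef
    have h2 : q + k ≤ q * (k + 1) := by nlinarith
    omega
  · -- squeeze between k*(m-k)/m and (k+1)
    have hupper : ∀ᶠ m : ℕ in Filter.atTop,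
        ((m - k : ℕ) : ℝ) / ((m / (k + 1) : ℕ) : ℝ) ≤ ((k + 1 : ℕ) : ℝ) := by
      filter_upwards [Filter.eventually_ge_atTop (k + 1)] with m hm
      have hmod : m % (k + 1) < k + 1 := Nat.mod_lt _ (by omega)
      have hdm := Nat.div_add_mod m (k + 1)
      have hnat : m - k ≤ (k + 1) * (m / (k + 1)) := by omega
      have hq1 : 1 ≤ m / (k + 1) := (Nat.one_le_div_iff (by omega)).2 hm
      have hfpos : (0 : ℝ) < ((m / (k + 1) : ℕ) : ℝ) := by exact_mod_cast hq1
      rw [div_le_iff₀ hfpos]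
      calc ((m - k : ℕ) : ℝ) ≤ (((k + 1) * (m / (k + 1)) : ℕ) : ℝ) := by exact_mod_cast hnat
        _ = ((k + 1 : ℕ) : ℝ) * ((m / (k + 1) : ℕ) : ℝ) := by push_cast; ring
    have hlower : ∀ᶠ m : ℕ in Filter.atTop,
        ((k + 1 : ℕ) : ℝ) * ((m - k : ℕ) : ℝ) / (m : ℝ) ≤
          ((m - k : ℕ) : ℝ) / ((m / (k + 1) : ℕ) : ℝ) := by
      filter_upwards [Filter.eventually_ge_atTop (k + 1)] with m hm
      have hq1 : 1 ≤ m / (k + 1) := (Nat.one_le_div_iff (by omega)).2 hm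
      have hfpos : (0 : ℝ) < ((m / (k + 1) : ℕ) : ℝ) := by exact_mod_cast hq1
      have hmpos : (0 : ℝ) < (m : ℝ) := by exact_mod_cast show 0 < m by omega
      have hq : (m / (k + 1)) * (k + 1) ≤ m := Nat.div_mul_le_self m (k + 1)
      have hqr : ((m / (k + 1) : ℕ) : ℝ) * ((k + 1 : ℕ) : ℝ) ≤ (m : ℝ) := by exact_mod_cast hq
      have hNpos : (0 : ℝ) ≤ ((m - k : ℕ) : ℝ) := by positivity
      rw [div_le_div_iff₀ hmpos hfpos]
      nlinarith
    have hg : Filter.Tendsto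
        (fun m : ℕ => ((k + 1 : ℕ) : ℝ) * ((m - k : ℕ) : ℝ) / (m : ℝ))
        Filter.atTop (nhds ((k + 1 : ℕ) : ℝ)) := by
      have heq : ∀ᶠ m : ℕ in Filter.atTop,
          ((k + 1 : ℕ) : ℝ) - ((k + 1 : ℕ) : ℝ) * (k : ℝ) * (1 / (m : ℝ)) =
            ((k + 1 : ℕ) : ℝ) * ((m - k : ℕ) : ℝ) / (m : ℝ) := by
        filter_upwards [Filter.eventually_ge_atTop (k + 1)] with m hm
        have hmpos : (0 : ℝ) < (m : ℝ) := by exact_mod_cast show 0 < m by omega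
        have hsub : ((m - k : ℕ) : ℝ) = (m : ℝ) - (k : ℝ) := by
          have : k ≤ m := by omega
          push_cast [this]; ring
        rw [hsub]
        field_simp
      refine Filter.Tendsto.congr' heq ?_
      have h0 : Filter.Tendsto (fun m : ℕ => (1 / (m : ℝ))) Filter.atTop (nhds 0) :=
        tendsto_one_div_atTop_nhds_zero_nat
      have h1 : Filter.Tendsto
          (fun m : ℕ => ((k + 1 : ℕ) : ℝ) - ((k + 1 : ℕ) : ℝ) * (k : ℝ) * (1 / (m : ℝ)))
          Filter.atTop (nhds (((k + 1 : ℕ) : ℝ) - ((k + 1 : ℕ) : ℝ) * (k : ℝ) * 0)) :=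
        Filter.Tendsto.sub tendsto_const_nhds (h0.const_mul _)
      simpa using h1
    exact tendsto_of_tendsto_of_tendsto_of_le_of_le' hg tendsto_const_nhds hlower hupper
end

section
/- The predictive coding inference dynamics for a two-layer linear network with clamped boundaries is a linear discrete dynamical system x^{(1)}_{t+1} = (I − γ(I + (θ^{(0)})ᵀθ^{(0)})) x^{(1)}_t + γ b, and it converges to the unique energy minimizer for any initialization whenever 0 < γ < 2/(1 + ‖θ^{(0)}‖²_op), where ‖·‖_op is the operator norm. -/
/-!
The error `e t = xseq t - A⁻¹ b` obeys `e (t + 1) = (1 - γ A) e t`. On Euclidean space,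
`1 - γ A = (1 - γ) - γ θ₀ᵀθ₀`, and since `⟪θ₀ᵀθ₀ y, y⟫ = ‖θ₀ y‖² ∈ [0, ‖θ₀‖² ‖y‖²]` its operator norm is
at most `max |1 - γ| |1 - γ (1 + ‖θ₀‖²)|`, which is `< 1` exactly when `0 < γ < 2 / (1 + ‖θ₀‖²)`.
Hence `e t → 0` geometrically.
-/

open Filter Topology
open scoped InnerProductSpace Matrix

lemma quad_le_max_abs_sq_mul {γ s Y q p : ℝ} (hY : 0 ≤ Y) (hq : 0 ≤ q) (hqY : q ≤ s * Y)
    (hp : p ≤ s * q) :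
    (1 - γ) ^ 2 * Y - 2 * γ * (1 - γ) * q + γ ^ 2 * p
      ≤ max |1 - γ| |1 - γ * (1 + s)| ^ 2 * Y := by
  set c := max |1 - γ| |1 - γ * (1 + s)|
  have hc₁ : (1 - γ) ^ 2 ≤ c ^ 2 := by
    rw [← sq_abs]; gcongr; exact le_max_left _ _
  have hc₂ : (1 - γ * (1 + s)) ^ 2 ≤ c ^ 2 := by
    rw [← sq_abs]; gcongr; exact le_max_right _ _
  have hγp : γ ^ 2 * p ≤ γ ^ 2 * (s * q) := by gcongr
  -- The bound is affine in `q ∈ [0, sY]`, so it suffices to check the two endpoints.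
  rcases le_or_gt (γ ^ 2 * s - 2 * γ * (1 - γ)) 0 with hslope | hslope
  · nlinarith
  · nlinarith

lemma max_abs_one_sub_lt_one {γ s : ℝ} (hs : 0 ≤ s) (hγ : 0 < γ) (hγs : γ * (1 + s) < 2) :
    max |1 - γ| |1 - γ * (1 + s)| < 1 := by
  have : 0 < γ * (1 + s) := by positivity
  refine max_lt (abs_lt.mpr ⟨?_, ?_⟩) (abs_lt.mpr ⟨?_, ?_⟩) <;> nlinarith

namespace ContinuousLinearMap

variable {E F : Type*} [NormedAddCommGroup E] [InnerProductSpace ℝ E] [CompleteSpace E]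
  [NormedAddCommGroup F] [InnerProductSpace ℝ F] [CompleteSpace F]

theorem norm_one_sub_smul_one_add_adjoint_comp_self_le (T : E →L[ℝ] F) (γ : ℝ) :
    ‖1 - γ • (1 + adjoint T ∘L T)‖ ≤ max |1 - γ| |1 - γ * (1 + ‖T‖ ^ 2)| := by
  refine opNorm_le_bound _ ((abs_nonneg _).trans (le_max_left _ _)) fun y => ?_
  have hinner : ⟪y, adjoint T (T y)⟫_ℝ = ‖T y‖ ^ 2 := by
    rw [adjoint_inner_right, real_inner_self_eq_norm_sq]
  have hTy : ‖T y‖ ≤ ‖T‖ * ‖y‖ := T.le_opNorm y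
  have hTTy : ‖adjoint T (T y)‖ ≤ ‖T‖ * ‖T y‖ := by
    simpa only [adjoint.norm_map] using (adjoint T).le_opNorm (T y)
  have hexpand : ‖(1 - γ • (1 + adjoint T ∘L T)) y‖ ^ 2
      = (1 - γ) ^ 2 * ‖y‖ ^ 2 - 2 * γ * (1 - γ) * ‖T y‖ ^ 2
          + γ ^ 2 * ‖adjoint T (T y)‖ ^ 2 := by
    have : (1 - γ • (1 + adjoint T ∘L T)) y = (1 - γ) • y - γ • adjoint T (T y) := by
      simp only [sub_apply, smul_apply, add_apply, one_apply_eq_self, comp_apply]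
      module
    rw [this, norm_sub_sq_real, real_inner_smul_left, real_inner_smul_right, hinner,
      norm_smul, norm_smul, mul_pow, mul_pow, Real.norm_eq_abs, Real.norm_eq_abs, sq_abs, sq_abs]
    ring
  refine pow_le_pow_iff_left₀ (norm_nonneg _) (by positivity) two_ne_zero |>.mp ?_
  rw [hexpand, mul_pow]
  refine quad_le_max_abs_sq_mul (sq_nonneg _) (sq_nonneg _) ?_ ?_
  · rw [← mul_pow]; gcongr
  · rw [← mul_pow]; gcongr

end ContinuousLinearMap

theorem tendsto_of_sub_eq_apply_sub {𝕜 V : Type*} [NontriviallyNormedField 𝕜]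
    [SeminormedAddCommGroup V] [NormedSpace 𝕜 V] (M : V →L[𝕜] V) (hM : ‖M‖ < 1)
    {x : ℕ → V} {x₀ : V} (h : ∀ t, x (t + 1) - x₀ = M (x t - x₀)) :
    Tendsto x atTop (𝓝 x₀) := by
  have herr : ∀ t, x t - x₀ = (M ^ t) (x 0 - x₀) := by
    intro t
    induction t with
    | zero => simp
    | succ t ih => rw [h, ih, pow_succ']; rfl
  have hpow : Tendsto (fun t => (M ^ t) (x 0 - x₀)) atTop (𝓝 0) := by
    have := ((ContinuousLinearMap.apply 𝕜 V (x 0 - x₀)).continuous.tendsto 0).comp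
      (tendsto_pow_atTop_nhds_zero_of_norm_lt_one hM)
    rwa [map_zero] at this
  exact tendsto_sub_nhds_zero_iff.mp (hpow.congr fun t => (herr t).symm)

namespace Matrix

variable {𝕜 m n : Type*} [RCLike 𝕜] [Fintype m] [Fintype n] [DecidableEq m] [DecidableEq n]

theorem tendsto_of_sub_eq_mulVec_sub (M : Matrix n n 𝕜)
    (hM : ‖(toEuclideanLin M).toContinuousLinearMap‖ < 1) {x : ℕ → n → 𝕜} {x₀ : n → 𝕜}
    (h : ∀ t, x (t + 1) - x₀ = M *ᵥ (x t - x₀)) : Tendsto x atTop (𝓝 x₀) := by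
  have hlift := tendsto_of_sub_eq_apply_sub _ hM
    (x := fun t => WithLp.toLp 2 (x t)) (x₀ := WithLp.toLp 2 x₀) fun t => by
      rw [← WithLp.toLp_sub, ← WithLp.toLp_sub, h t]; rfl
  exact ((PiLp.continuous_ofLp 2 _).tendsto _).comp hlift

theorem toContinuousLinearMap_toEuclideanLin_conjTranspose_mul_self (θ : Matrix m n 𝕜) :
    (toEuclideanLin (θᴴ * θ)).toContinuousLinearMap
      = ContinuousLinearMap.adjoint (toEuclideanLin θ).toContinuousLinearMap
          ∘L (toEuclideanLin θ).toContinuousLinearMap := by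
  ext1 y
  refine Eq.trans ?_ <| LinearMap.congr_fun
    (LinearMap.adjoint_eq_toCLM_adjoint (toEuclideanLin θ)) (toEuclideanLin θ y)
  rw [← toEuclideanLin_conjTranspose_eq_adjoint]
  simp [toLpLin_apply, mulVec_mulVec]

theorem toContinuousLinearMap_toEuclideanLin_one_sub_smul_one_add_conjTranspose_mul_self
    (θ : Matrix m n 𝕜) (γ : 𝕜) :
    (toEuclideanLin (1 - γ • (1 + θᴴ * θ))).toContinuousLinearMap
      = 1 - γ • (1 + ContinuousLinearMap.adjoint (toEuclideanLin θ).toContinuousLinearMap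
          ∘L (toEuclideanLin θ).toContinuousLinearMap) := by
  have hone : (toEuclideanLin (1 : Matrix n n 𝕜)).toContinuousLinearMap = 1 := by
    ext1 y; simp
  rw [← toContinuousLinearMap_toEuclideanLin_conjTranspose_mul_self, map_sub, map_smul, map_add,
    map_sub, map_smul, map_add, hone]

end Matrix

theorem stmt_14_general (n0 n1 : ℕ)
    (θ0 : Matrix (Fin n0) (Fin n1) ℝ)
    (A : Matrix (Fin n1) (Fin n1) ℝ) (hA : A = 1 + θ0.transpose * θ0)
    (b : Fin n1 → ℝ)
    (γ : ℝ) (hγ0 : 0 < γ)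
    (hγ2 : γ < 2 / (1 + ‖LinearMap.toContinuousLinearMap (Matrix.toEuclideanLin θ0)‖ ^ 2))
    (xseq : ℕ → (Fin n1 → ℝ))
    (hupd : ∀ t, xseq (t + 1) = xseq t - γ • (A.mulVec (xseq t) - b)) :
    (∀ t, xseq (t + 1) = (1 - γ • A).mulVec (xseq t) + γ • b)
      ∧ Filter.Tendsto xseq Filter.atTop (nhds (A⁻¹.mulVec b)) := by
  set T := LinearMap.toContinuousLinearMap (Matrix.toEuclideanLin θ0)
  refine ⟨fun t => ?_, ?_⟩
  · rw [hupd, Matrix.sub_mulVec, Matrix.one_mulVec, Matrix.smul_mulVec, smul_sub]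
    abel
  have hA_posDef : A.PosDef := hA ▸ θ0.conjTranspose_eq_transpose_of_trivial ▸
    Matrix.PosDef.one.add_posSemidef θ0.posSemidef_conjTranspose_mul_self
  have hfix : A *ᵥ (A⁻¹ *ᵥ b) = b := by
    rw [Matrix.mulVec_mulVec, Matrix.mul_nonsing_inv _ hA_posDef.det_pos.ne'.isUnit,
      Matrix.one_mulVec]
  have hM : (Matrix.toEuclideanLin (1 - γ • A)).toContinuousLinearMap
      = 1 - γ • (1 + ContinuousLinearMap.adjoint T ∘L T) := by
    rw [hA, ← θ0.conjTranspose_eq_transpose_of_trivial,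
      Matrix.toContinuousLinearMap_toEuclideanLin_one_sub_smul_one_add_conjTranspose_mul_self]
  refine (1 - γ • A).tendsto_of_sub_eq_mulVec_sub ?_ fun t => ?_
  · calc _ = ‖1 - γ • (1 + ContinuousLinearMap.adjoint T ∘L T)‖ := by rw [hM]
      _ ≤ _ := T.norm_one_sub_smul_one_add_adjoint_comp_self_le γ
      _ < 1 := max_abs_one_sub_lt_one (sq_nonneg _) hγ0
        ((lt_div_iff₀ (by positivity)).mp hγ2)
  · rw [hupd, Matrix.sub_mulVec, Matrix.one_mulVec, Matrix.smul_mulVec, Matrix.mulVec_sub, hfix]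
    abel

/-- The predictive coding inference dynamics for a two-layer linear network with clamped
boundaries is the linear discrete dynamical system
`x_{t+1} = (I - γ(I + θ₀ᵀθ₀)) x_t + γ b`, and it converges from any initialization to the
unique energy minimizer `(I + θ₀ᵀθ₀)⁻¹ b` whenever `0 < γ < 2 / (1 + ‖θ₀‖_op²)`. -/
theorem stmt_14 (n0 n1 n2 : ℕ)
    (θ0 : Matrix (Fin n0) (Fin n1) ℝ) (θ1 : Matrix (Fin n1) (Fin n2) ℝ)
    (sIn : Fin n2 → ℝ) (sOut : Fin n0 → ℝ)
    (A : Matrix (Fin n1) (Fin n1) ℝ) (hA : A = 1 + θ0.transpose * θ0)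
    (b : Fin n1 → ℝ) (hb : b = θ1.mulVec sIn + θ0.transpose.mulVec sOut)
    (γ : ℝ) (hγ0 : 0 < γ)
    (hγ2 : γ < 2 / (1 + ‖LinearMap.toContinuousLinearMap (Matrix.toEuclideanLin θ0)‖ ^ 2))
    (xseq : ℕ → (Fin n1 → ℝ))
    (hupd : ∀ t, xseq (t + 1) = xseq t - γ • (A.mulVec (xseq t) - b)) :
    (∀ t, xseq (t + 1) = (1 - γ • A).mulVec (xseq t) + γ • b)
      ∧ Filter.Tendsto xseq Filter.atTop (nhds (A⁻¹.mulVec b)) :=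
  stmt_14_general n0 n1 θ0 A hA b γ hγ0 hγ2 xseq hupd
end

section
/- With feedforward initialization in a supervised predictive coding network, the weight update Δθ^{(L-1)} performed at inference step t = 0 on the layer adjacent to the output is identically zero, and after one inference step the error has propagated exactly one layer up: at t = 1, ε^{(l)} = 0 for all l ≥ 2 while ε^{(1)} may be nonzero. -/
open Finset

/-- With feedforward initialization, the weight update of the layer adjacent to the output at
`t = 0` is identically zero, and after one inference step the error has propagated exactly one
layer up: at `t = 1` all errors `ε^(l)` for `l ≥ 2` still vanish. -/
theorem stmt_16 (L : ℕ) (hL : 3 ≤ L) (n : ℕ → ℕ)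
    (θ : (k : ℕ) → Matrix (Fin (n k)) (Fin (n (k+1))) ℝ)
    (f f' : ℝ → ℝ) (γ α : ℝ)
    (yin : Fin (n L) → ℝ) (yout : Fin (n 0) → ℝ)
    (μ : (k : ℕ) → Fin (n k) → ℝ)
    (hμL : μ L = yin)
    (hμ : ∀ l < L, ∀ i, μ l i = ∑ j, θ l i j * f (μ (l+1) j))
    -- values at inference time t = 0 (feedforward initialization)
    (x0 : (k : ℕ) → Fin (n k) → ℝ)
    (hx00 : x0 0 = yout) (hx0L : x0 L = yin)
    (hx0mid : ∀ l, 1 ≤ l → l < L → x0 l = μ l)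
    (ε0 : (k : ℕ) → Fin (n k) → ℝ)
    (hε0 : ∀ k i, ε0 k i = x0 k i - ∑ j, θ k i j * f (x0 (k+1) j))
    -- values at inference time t = 1 after one inference step on the hidden layers
    (x1 : (k : ℕ) → Fin (n k) → ℝ)
    (hx10 : x1 0 = yout) (hx1L : x1 L = yin)
    (hx1mid : ∀ m, m + 1 < L → ∀ i,
        x1 (m+1) i = x0 (m+1) i
          + γ * (-(ε0 (m+1) i) + f' (x0 (m+1) i) * ∑ a, θ m a i * ε0 m a))
    (ε1 : (k : ℕ) → Fin (n k) → ℝ)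
    (hε1 : ∀ k i, ε1 k i = x1 k i - ∑ j, θ k i j * f (x1 (k+1) j)) :
    -- the weight update Δθ^(L-1) = α ε0^(L-1) f(x0^(L))ᵀ at t = 0 is zero
    (∀ (a : Fin (n (L-1))) (b : Fin (n L)), α * ε0 (L-1) a * f (x0 L b) = 0)
      -- and at t = 1 the errors at all layers l ≥ 2 still vanish
      ∧ (∀ l, 2 ≤ l → l < L → ∀ i, ε1 l i = 0) := by
  -- x0 equals μ on all layers 1 ≤ l ≤ L
  have hx0eq : ∀ l, 1 ≤ l → l ≤ L → x0 l = μ l := by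
    intro l h1 h2
    rcases eq_or_lt_of_le h2 with h | h
    · subst h; rw [hx0L, hμL]
    · exact hx0mid l h1 h
  -- ε0 vanishes on layers 1 ≤ l < L
  have hε0z : ∀ l, 1 ≤ l → l < L → ∀ i, ε0 l i = 0 := by
    intro l h1 h2 i
    rw [hε0, hx0eq l h1 (le_of_lt h2), hx0eq (l+1) (by omega) (by omega), hμ l h2 i]
    ring
  -- x1 equals μ on layers 2 ≤ l < L
  have hx1eq : ∀ l, 2 ≤ l → l ≤ L → x1 l = μ l := by
    intro l h1 h2
    rcases eq_or_lt_of_le h2 with h | h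
    · subst h; rw [hx1L, hμL]
    · funext i
      obtain ⟨m, rfl⟩ : ∃ m, l = m + 1 := ⟨l - 1, by omega⟩
      rw [hx1mid m h i, hε0z (m+1) (by omega) h i]
      have : ∀ a, θ m a i * ε0 m a = 0 := by
        intro a; rw [hε0z m (by omega) (by omega) a]; ring
      rw [Finset.sum_congr rfl (fun a _ => this a), Finset.sum_const_zero,
        hx0eq (m+1) (by omega) (le_of_lt h)]
      ring
  constructor
  · intro a b
    rw [hε0z (L-1) (by omega) (by omega) a]; ring
  · intro l h1 h2 i
    rw [hε1, hx1eq l h1 (le_of_lt h2), hx1eq (l+1) (by omega) (by omega), hμ l h2 i]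
    ring
end
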